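/- Let d > 1 and 1 ≤ p ≤ d be integers. Then E_MB[p,d] = Γ(d/2) · Γ(p/2 + 1/2) / (Γ(d/2 + 1/2) · Γ(p/2)); that is, the integral of (x_1² + ⋯ + x_p²)^{1/2} over the unit sphere S^{d-1} with respect to the uniform probability measure equals this ratio of Gamma functions. -/

import Mathlib

open MeasureTheory Real Set Metric

section Aux

lemma aux_K (n : ℕ) : ∫ r in Ioi (0:ℝ), r ^ n * rexp (-r ^ 2) = Gamma (((n:ℝ) + 1) / 2) / 2 := by
  have h := integral_rpow_mul_exp_neg_rpow (p := 2) (q := (n:ℝ)) two_pos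
    (neg_one_lt_zero.trans_le (Nat.cast_nonneg n))
  calc ∫ r in Ioi (0:ℝ), r ^ n * rexp (-r ^ 2)
      = ∫ x in Ioi (0:ℝ), x ^ (n:ℝ) * rexp (-x ^ (2:ℝ)) := by
        refine setIntegral_congr_fun measurableSet_Ioi fun x hx => ?_
        rw [rpow_natCast, show (2:ℝ) = ((2:ℕ):ℝ) by norm_num, rpow_natCast]
    _ = Gamma (((n:ℝ) + 1) / 2) / 2 := by rw [h]; ring

lemma integral_volumeIoiPow (n : ℕ) (g : ℝ → ℝ) :
    ∫ r : Ioi (0:ℝ), g r ∂(Measure.volumeIoiPow n) = ∫ r in Ioi (0:ℝ), r ^ n * g r := by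
  rw [Measure.volumeIoiPow]
  simp only [ENNReal.ofReal]
  rw [integral_withDensity_eq_integral_smul ((measurable_subtype_coe.pow_const _).real_toNNReal),
    integral_subtype_comap measurableSet_Ioi (fun a : ℝ => Real.toNNReal (a ^ n) • g a)]
  refine setIntegral_congr_fun measurableSet_Ioi fun x hx => ?_
  rw [NNReal.smul_def, Real.coe_toNNReal _ (pow_nonneg hx.out.le _), smul_eq_mul]

lemma euclid_nontrivial {n : ℕ} (hn : 0 < n) : Nontrivial (EuclideanSpace ℝ (Fin n)) :=
  ⟨⟨EuclideanSpace.single ⟨0, hn⟩ 1, 0, fun h => by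
    have := congrArg (fun v : EuclideanSpace ℝ (Fin n) => v ⟨0, hn⟩) h
    simp at this⟩⟩

lemma polar_integral {n : ℕ} (hn : 0 < n) (f : EuclideanSpace ℝ (Fin n) → ℝ)
    (hhom : ∀ r : ℝ, 0 < r → ∀ x, f (r • x) = r * f x) :
    ∫ x, f x * rexp (-‖x‖ ^ 2) =
      (∫ ω : sphere (0 : EuclideanSpace ℝ (Fin n)) 1, f ω
          ∂((volume : Measure (EuclideanSpace ℝ (Fin n))).toSphere)) *
        ∫ r in Ioi (0:ℝ), r ^ n * rexp (-r ^ 2) := by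
  have : Nontrivial (EuclideanSpace ℝ (Fin n)) := euclid_nontrivial hn
  set μ := (volume : Measure (EuclideanSpace ℝ (Fin n))) with hμ
  have hdim : Module.finrank ℝ (EuclideanSpace ℝ (Fin n)) = n := finrank_euclideanSpace_fin
  set g : sphere (0:EuclideanSpace ℝ (Fin n)) 1 × Ioi (0:ℝ) → ℝ :=
    fun z => f z.1 * ((z.2 : ℝ) * rexp (-(z.2 : ℝ) ^ 2)) with hg
  have h2 : ∀ x : ({0}ᶜ : Set (EuclideanSpace ℝ (Fin n))),
      g (homeomorphUnitSphereProd (EuclideanSpace ℝ (Fin n)) x) =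
      f x * rexp (-‖(x : EuclideanSpace ℝ (Fin n))‖ ^ 2) := by
    intro x
    have hx : (x : EuclideanSpace ℝ (Fin n)) ≠ 0 := x.2
    have hnorm : (0:ℝ) < ‖(x : EuclideanSpace ℝ (Fin n))‖ := norm_pos_iff.2 hx
    simp only [hg, homeomorphUnitSphereProd_apply_fst_coe,
      homeomorphUnitSphereProd_apply_snd_coe]
    rw [hhom _ (inv_pos.2 hnorm)]
    field_simp
  calc ∫ x, f x * rexp (-‖x‖ ^ 2) ∂μ
      = ∫ x : ({0}ᶜ : Set (EuclideanSpace ℝ (Fin n))),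
          f x * rexp (-‖(x : EuclideanSpace ℝ (Fin n))‖ ^ 2) ∂(μ.comap (↑)) := by
        rw [integral_subtype_comap (measurableSet_singleton _).compl
          (fun x => f x * rexp (-‖x‖ ^ 2)), restrict_compl_singleton]
    _ = ∫ z, g z ∂(μ.toSphere.prod
          (.volumeIoiPow (Module.finrank ℝ (EuclideanSpace ℝ (Fin n)) - 1))) := by
        rw [← μ.measurePreserving_homeomorphUnitSphereProd.integral_comp
          (Homeomorph.measurableEmbedding _) g]
        exact integral_congr_ae (Filter.Eventually.of_forall fun x => (h2 x).symm)
    _ = (∫ ω : sphere (0:EuclideanSpace ℝ (Fin n)) 1, f ω ∂μ.toSphere) *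
          ∫ r : Ioi (0:ℝ), (r : ℝ) * rexp (-(r:ℝ) ^ 2)
            ∂(Measure.volumeIoiPow (Module.finrank ℝ (EuclideanSpace ℝ (Fin n)) - 1)) :=
        integral_prod_mul (fun ω : sphere (0:EuclideanSpace ℝ (Fin n)) 1 => f ω)
          (fun r : Ioi (0:ℝ) => (r : ℝ) * rexp (-(r:ℝ) ^ 2))
    _ = (∫ ω : sphere (0:EuclideanSpace ℝ (Fin n)) 1, f ω ∂μ.toSphere) *
          ∫ r in Ioi (0:ℝ), r ^ (n - 1) * (r * rexp (-r ^ 2)) := by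
        rw [hdim, integral_volumeIoiPow (n-1) (fun t : ℝ => t * rexp (-t ^ 2))]
    _ = _ := by
        congr 1
        refine setIntegral_congr_fun measurableSet_Ioi fun x hx => ?_
        rw [← mul_assoc, ← pow_succ, Nat.sub_add_cancel hn]

lemma integral_fun_norm {n : ℕ} (hn : 0 < n) (g : ℝ → ℝ) :
    ∫ x : EuclideanSpace ℝ (Fin n), g ‖x‖ =
      ((volume : Measure (EuclideanSpace ℝ (Fin n))).toSphere univ).toReal *
        ∫ r in Ioi (0:ℝ), r ^ (n - 1) * g r := by
  haveI := euclid_nontrivial hn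
  rw [integral_fun_norm_addHaar volume g, Measure.toSphere_apply_univ]
  simp only [finrank_euclideanSpace_fin, ENNReal.toReal_mul, ENNReal.toReal_natCast,
    nsmul_eq_mul, smul_eq_mul]
  rw [mul_assoc]
  rfl

lemma gauss_euclid (n : ℕ) :
    ∫ x : EuclideanSpace ℝ (Fin n), rexp (-‖x‖ ^ 2) = π ^ ((n:ℝ) / 2) := by
  have h1 := GaussianFourier.integral_rexp_neg_mul_sq_norm
    (V := EuclideanSpace ℝ (Fin n)) one_pos
  simp only [neg_mul, one_mul, finrank_euclideanSpace_fin, div_one] at h1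
  exact h1

lemma S_eq {n : ℕ} (hn : 0 < n) :
    ((volume : Measure (EuclideanSpace ℝ (Fin n))).toSphere univ).toReal *
      (Gamma ((n:ℝ) / 2) / 2) = π ^ ((n:ℝ) / 2) := by
  have h := integral_fun_norm hn (fun r => rexp (-r ^ 2))
  have hK : ∫ r in Ioi (0:ℝ), r ^ (n - 1) * rexp (-r ^ 2) = Gamma ((n:ℝ) / 2) / 2 := by
    rw [aux_K (n - 1)]
    congr 2
    rw [Nat.cast_sub hn]
    ring
  rw [gauss_euclid n, hK] at h
  exact h.symm

lemma norm_gauss {n : ℕ} (hn : 0 < n) :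
    ∫ x : EuclideanSpace ℝ (Fin n), ‖x‖ * rexp (-‖x‖ ^ 2) =
      ((volume : Measure (EuclideanSpace ℝ (Fin n))).toSphere univ).toReal *
        (Gamma ((n:ℝ) / 2 + 1 / 2) / 2) := by
  have h := integral_fun_norm hn (fun r => r * rexp (-r ^ 2))
  rw [h]
  congr 1
  calc ∫ r in Ioi (0:ℝ), r ^ (n - 1) * (r * rexp (-r ^ 2))
      = ∫ r in Ioi (0:ℝ), r ^ n * rexp (-r ^ 2) := by
        refine setIntegral_congr_fun measurableSet_Ioi fun x hx => ?_
        rw [← mul_assoc, ← pow_succ, Nat.sub_add_cancel hn]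
    _ = Gamma ((n:ℝ) / 2 + 1 / 2) / 2 := by rw [aux_K n]; congr 2; ring

lemma sq_norm_euclid {n : ℕ} (x : EuclideanSpace ℝ (Fin n)) :
    ‖x‖ ^ 2 = ∑ i, x i ^ 2 := by
  rw [EuclideanSpace.norm_eq, sq_sqrt (by positivity)]
  simp [Real.norm_eq_abs, sq_abs]

lemma norm_euclid {n : ℕ} (x : EuclideanSpace ℝ (Fin n)) :
    ‖x‖ = Real.sqrt (∑ i, x i ^ 2) := by
  rw [EuclideanSpace.norm_eq]
  simp [Real.norm_eq_abs, sq_abs]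

lemma split_gauss (d p : ℕ) (hpd : p ≤ d) :
    ∫ x : EuclideanSpace ℝ (Fin d),
        Real.sqrt (∑ i ∈ Finset.univ.filter (fun i : Fin d => (i : ℕ) < p), (x i) ^ 2) *
          rexp (-‖x‖ ^ 2) =
      (∫ y : EuclideanSpace ℝ (Fin p), ‖y‖ * rexp (-‖y‖ ^ 2)) *
        ∫ z : EuclideanSpace ℝ (Fin (d - p)), rexp (-‖z‖ ^ 2) := by
  classical
  set q : Fin d → Prop := fun i => (i : ℕ) < p with hq
  have κ : Fin p ≃ {i : Fin d // q i} :=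
    { toFun := fun j => ⟨Fin.castLE hpd j, by simp [hq, Fin.coe_castLE]⟩
      invFun := fun i => ⟨(i : Fin d), i.2⟩
      left_inv := fun j => by ext; simp
      right_inv := fun i => by ext; simp }
  have cardq : Fintype.card {i : Fin d // q i} = p := by
    rw [← Fintype.card_congr κ, Fintype.card_fin]
  have cardq' : Fintype.card {i : Fin d // ¬ q i} = d - p := by
    rw [Fintype.card_subtype_compl, cardq, Fintype.card_fin]
  have κ' : Fin (d - p) ≃ {i : Fin d // ¬ q i} := (Fintype.equivFinOfCardEq cardq').symm
  set F : (Fin d → ℝ) → ℝ := fun y =>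
    Real.sqrt (∑ i ∈ Finset.univ.filter q, y i ^ 2) * rexp (-∑ i, y i ^ 2) with hF
  set F₁ : ({i : Fin d // q i} → ℝ) → ℝ := fun a =>
    Real.sqrt (∑ i, a i ^ 2) * rexp (-∑ i, a i ^ 2) with hF₁
  set F₂ : ({i : Fin d // ¬ q i} → ℝ) → ℝ := fun b => rexp (-∑ i, b i ^ 2) with hF₂
  have step1 : ∫ x : EuclideanSpace ℝ (Fin d),
      Real.sqrt (∑ i ∈ Finset.univ.filter q, (x i) ^ 2) * rexp (-‖x‖ ^ 2) =
      ∫ y : Fin d → ℝ, F y := by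
    rw [← (EuclideanSpace.volume_preserving_symm_measurableEquiv_toLp (Fin d)).integral_comp
      (MeasurableEquiv.toLp 2 (Fin d → ℝ)).symm.measurableEmbedding F]
    refine integral_congr_ae (Filter.Eventually.of_forall fun x => ?_)
    simp only [hF, MeasurableEquiv.coe_toLp_symm]
    rw [sq_norm_euclid]
  have step2 : ∫ y : Fin d → ℝ, F y =
      ∫ z : ({i : Fin d // q i} → ℝ) × ({i : Fin d // ¬ q i} → ℝ), F₁ z.1 * F₂ z.2 := by
    rw [← ((MeasureTheory.volume_preserving_piEquivPiSubtypeProd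
      (fun _ : Fin d => ℝ) q).symm).integral_comp
      (MeasurableEquiv.piEquivPiSubtypeProd (fun _ : Fin d => ℝ) q).symm.measurableEmbedding
      (fun y : Fin d → ℝ => F y)]
    refine integral_congr_ae (Filter.Eventually.of_forall fun z => ?_)
    have happ : ∀ i : Fin d,
        (MeasurableEquiv.piEquivPiSubtypeProd (fun _ : Fin d => ℝ) q).symm z i =
          if h : q i then z.1 ⟨i, h⟩ else z.2 ⟨i, h⟩ := fun i => rfl
    have hs1 : ∑ i ∈ Finset.univ.filter q,
        ((MeasurableEquiv.piEquivPiSubtypeProd (fun _ : Fin d => ℝ) q).symm z i) ^ 2 =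
        ∑ i : {i : Fin d // q i}, z.1 i ^ 2 := by
      rw [Finset.sum_subtype (p := q) (Finset.univ.filter q) (by simp)
        (fun i => ((MeasurableEquiv.piEquivPiSubtypeProd (fun _ : Fin d => ℝ) q).symm z i) ^ 2)]
      refine Finset.sum_congr rfl fun i _ => ?_
      rw [happ, dif_pos i.2]
    have hs1' : ∑ i ∈ Finset.univ.filter (fun i => ¬ q i),
        ((MeasurableEquiv.piEquivPiSubtypeProd (fun _ : Fin d => ℝ) q).symm z i) ^ 2 =
        ∑ i : {i : Fin d // ¬ q i}, z.2 i ^ 2 := by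
      rw [Finset.sum_subtype (p := fun i => ¬ q i) (Finset.univ.filter fun i => ¬ q i) (by simp)
        (fun i => ((MeasurableEquiv.piEquivPiSubtypeProd (fun _ : Fin d => ℝ) q).symm z i) ^ 2)]
      refine Finset.sum_congr rfl fun i _ => ?_
      rw [happ, dif_neg i.2]
    have hs2 : ∑ i, ((MeasurableEquiv.piEquivPiSubtypeProd (fun _ : Fin d => ℝ) q).symm z i) ^ 2 =
        (∑ i : {i : Fin d // q i}, z.1 i ^ 2) + ∑ i : {i : Fin d // ¬ q i}, z.2 i ^ 2 := by
      rw [← Finset.sum_filter_add_sum_filter_not Finset.univ q, hs1, hs1']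
    simp only [hF, hF₁, hF₂, hs1, hs2, neg_add, Real.exp_add]
    ring
  have step3 : ∫ z : ({i : Fin d // q i} → ℝ) × ({i : Fin d // ¬ q i} → ℝ), F₁ z.1 * F₂ z.2 =
      (∫ a, F₁ a) * ∫ b, F₂ b := integral_prod_mul F₁ F₂
  have fact1 : ∫ a, F₁ a = ∫ y : EuclideanSpace ℝ (Fin p), ‖y‖ * rexp (-‖y‖ ^ 2) := by
    rw [← (MeasureTheory.volume_measurePreserving_piCongrLeft
      (fun _ : {i : Fin d // q i} => ℝ) κ).integral_comp
      (MeasurableEquiv.piCongrLeft (fun _ : {i : Fin d // q i} => ℝ) κ).measurableEmbedding F₁]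
    rw [← (EuclideanSpace.volume_preserving_symm_measurableEquiv_toLp (Fin p)).integral_comp
      (MeasurableEquiv.toLp 2 (Fin p → ℝ)).symm.measurableEmbedding _]
    refine integral_congr_ae (Filter.Eventually.of_forall fun y => ?_)
    have hsum : ∑ i : {i : Fin d // q i},
        ((MeasurableEquiv.piCongrLeft (fun _ : {i : Fin d // q i} => ℝ) κ)
          ((MeasurableEquiv.toLp 2 (Fin p → ℝ)).symm y) i) ^ 2 = ∑ j : Fin p, y j ^ 2 := by
      refine (Fintype.sum_equiv κ _ _ fun j => ?_).symm
      rw [MeasurableEquiv.coe_piCongrLeft, Equiv.piCongrLeft_apply_apply]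
      rfl
    simp only [hF₁, hsum]
    rw [norm_euclid y, sq_sqrt (Finset.sum_nonneg fun i _ => sq_nonneg (y i))]
  have fact2 : ∫ b, F₂ b = ∫ z : EuclideanSpace ℝ (Fin (d - p)), rexp (-‖z‖ ^ 2) := by
    rw [← (MeasureTheory.volume_measurePreserving_piCongrLeft
      (fun _ : {i : Fin d // ¬ q i} => ℝ) κ').integral_comp
      (MeasurableEquiv.piCongrLeft (fun _ : {i : Fin d // ¬ q i} => ℝ) κ').measurableEmbedding F₂]
    rw [← (EuclideanSpace.volume_preserving_symm_measurableEquiv_toLp (Fin (d - p))).integral_comp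
      (MeasurableEquiv.toLp 2 (Fin (d - p) → ℝ)).symm.measurableEmbedding _]
    refine integral_congr_ae (Filter.Eventually.of_forall fun z => ?_)
    have hsum : ∑ i : {i : Fin d // ¬ q i},
        ((MeasurableEquiv.piCongrLeft (fun _ : {i : Fin d // ¬ q i} => ℝ) κ')
          ((MeasurableEquiv.toLp 2 (Fin (d - p) → ℝ)).symm z) i) ^ 2 = ∑ j : Fin (d - p), z j ^ 2 := by
      refine (Fintype.sum_equiv κ' _ _ fun j => ?_).symm
      rw [MeasurableEquiv.coe_piCongrLeft, Equiv.piCongrLeft_apply_apply]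
      rfl
    simp only [hF₂, hsum]
    rw [sq_norm_euclid z]
  rw [step1, step2, step3, fact1, fact2]

end Aux

noncomputable def sphereUniform (d : ℕ) :
    Measure (Metric.sphere (0 : EuclideanSpace ℝ (Fin d)) 1) :=
  ((volume : Measure (EuclideanSpace ℝ (Fin d))).toSphere Set.univ)⁻¹ •
    (volume : Measure (EuclideanSpace ℝ (Fin d))).toSphere

/-- `E_MB[p,d] = ∫_{S^{d-1}} (∑_{i=1}^p x_i²)^{1/2} dσ_d(x)`. -/
noncomputable def E_MB (p d : ℕ) : ℝ :=
  ∫ x : Metric.sphere (0 : EuclideanSpace ℝ (Fin d)) 1,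
    Real.sqrt (∑ i ∈ Finset.univ.filter (fun i : Fin d => (i : ℕ) < p),
      ((x : EuclideanSpace ℝ (Fin d)) i) ^ 2) ∂(sphereUniform d)

/-- For integers `d > 1` and `1 ≤ p ≤ d`,
`E_MB[p,d] = Γ(d/2)Γ(p/2+1/2)/(Γ(d/2+1/2)Γ(p/2))`. -/
theorem E_MB_formula (d p : ℕ) (hd : 1 < d) (hp : 1 ≤ p) (hpd : p ≤ d) :
    E_MB p d = Real.Gamma ((d : ℝ) / 2) * Real.Gamma ((p : ℝ) / 2 + 1 / 2) /
      (Real.Gamma ((d : ℝ) / 2 + 1 / 2) * Real.Gamma ((p : ℝ) / 2)) := by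
  have hd0 : 0 < d := by omega
  have hp0 : 0 < p := hp
  set f : EuclideanSpace ℝ (Fin d) → ℝ := fun x =>
    Real.sqrt (∑ i ∈ Finset.univ.filter (fun i : Fin d => (i : ℕ) < p), x i ^ 2) with hf
  have hhom : ∀ r : ℝ, 0 < r → ∀ x, f (r • x) = r * f x := by
    intro r hr x
    simp only [hf]
    have hsm : ∀ i : Fin d, (r • x) i = r * x i := fun i => rfl
    simp_rw [hsm, mul_pow, ← Finset.mul_sum, sqrt_mul (sq_nonneg r), sqrt_sq hr.le]
  set a := ((volume : Measure (EuclideanSpace ℝ (Fin d))).toSphere univ).toReal with ha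
  set b := ((volume : Measure (EuclideanSpace ℝ (Fin p))).toSphere univ).toReal with hb
  set T := ∫ ω : sphere (0 : EuclideanSpace ℝ (Fin d)) 1, f ω
      ∂((volume : Measure (EuclideanSpace ℝ (Fin d))).toSphere) with hT
  -- E_MB as a⁻¹ * T
  have hE : E_MB p d = a⁻¹ * T := by
    rw [E_MB, sphereUniform, integral_smul_measure, ENNReal.toReal_inv, smul_eq_mul, ha, hT]
  -- key equation from polar + splitting
  have hkey : T * (Gamma ((d:ℝ)/2 + 1/2) / 2) =
      (b * (Gamma ((p:ℝ)/2 + 1/2) / 2)) * π ^ (((d - p : ℕ):ℝ) / 2) := by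
    have hpolar := polar_integral hd0 f hhom
    have hKd : ∫ r in Ioi (0:ℝ), r ^ d * rexp (-r ^ 2) = Gamma ((d:ℝ)/2 + 1/2) / 2 := by
      rw [aux_K d]; congr 2; ring
    rw [hKd] at hpolar
    have hsplit := split_gauss d p hpd
    rw [norm_gauss hp0, gauss_euclid (d - p)] at hsplit
    rw [hT, ← hpolar, hb]
    exact hsplit
  -- Gamma positivity
  have hd2 : (0:ℝ) < (d:ℝ)/2 := by positivity
  have hp2 : (0:ℝ) < (p:ℝ)/2 := by positivity
  have hΓd : 0 < Gamma ((d:ℝ)/2) := Gamma_pos_of_pos hd2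
  have hΓp : 0 < Gamma ((p:ℝ)/2) := Gamma_pos_of_pos hp2
  have hΓd2 : 0 < Gamma ((d:ℝ)/2 + 1/2) := Gamma_pos_of_pos (by linarith)
  have hΓp2 : 0 < Gamma ((p:ℝ)/2 + 1/2) := Gamma_pos_of_pos (by linarith)
  have hπp : (0:ℝ) < π ^ ((p:ℝ)/2) := rpow_pos_of_pos pi_pos _
  have hπdp : (0:ℝ) < π ^ (((d - p : ℕ):ℝ)/2) := rpow_pos_of_pos pi_pos _
  have hπsplit : π ^ ((p:ℝ)/2) * π ^ (((d - p : ℕ):ℝ)/2) = π ^ ((d:ℝ)/2) := by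
    rw [← Real.rpow_add pi_pos, Nat.cast_sub hpd]
    ring_nf
  have ha' : a = π ^ ((d:ℝ)/2) / (Gamma ((d:ℝ)/2) / 2) := by
    rw [eq_div_iff (by positivity)]
    exact S_eq hd0
  have hb' : b = π ^ ((p:ℝ)/2) / (Gamma ((p:ℝ)/2) / 2) := by
    rw [eq_div_iff (by positivity)]
    exact S_eq hp0
  have hT' : T = (b * (Gamma ((p:ℝ)/2 + 1/2) / 2)) * π ^ (((d - p : ℕ):ℝ) / 2) /
      (Gamma ((d:ℝ)/2 + 1/2) / 2) := by
    rw [eq_div_iff (by positivity)]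
    exact hkey
  rw [hE, hT', hb', ha', ← hπsplit]
  field_simp
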